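/- Let $R$ be a commutative Noetherian local ring and $0 \to M_q \to M_{q-1} \to \cdots \to M_0$ a complex of finitely generated $R$-modules such that $\mathrm{depth}\, M_j \ge j$ for all $j$. If $i > 0$ is the largest index at which the homology $H_i$ is nonzero, then $\mathrm{depth}\, H_i \ge 1$; equivalently, if every nonzero positive-degree homology module has depth $0$, the complex is exact in positive degrees. -/

import Mathlib

/-!
Let `B_j ⊆ M_j` be the image of `M_{j+1}` and `Z_j ⊆ M_j` the kernel of the differential. For
`j ≥ i` the complex is exact at `M_{j+1}`, so `0 → B_{j+1} → M_{j+1} → B_j → 0` is exact, and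
descending induction from the top of the complex through the long exact `Ext(k, -)` sequence gives
`Ext^n(k, B_j) = 0` for `n ≤ j`, using `Ext^n(k, M_{j+1}) = 0` for `n ≤ j`. Then
`0 → B_i → Z_i → H_i → 0` with `Ext^1(k, B_i) = 0` and `Hom(k, Z_i) ⊆ Hom(k, M_i) = 0` gives
`Hom(k, H_i) = 0`, i.e. `depth H_i ≥ 1`. The argument works with any module in place of `k`.

The long exact sequence comes from the short exact sequence of complexes `Hom(P, -)`, where `P` is a
projective resolution of the first argument.
-/

open CategoryTheory Opposite

noncomputable section

/-- `Ext_R^k(M, N)` for modules over a commutative ring `R`, as a type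
(carrying its natural `R`-module structure from the `R`-linear `Ext` functor). -/
abbrev CExt (R : Type) [CommRing R] (k : ℕ) (M N : Type) [AddCommGroup M] [Module R M]
    [AddCommGroup N] [Module R N] : Type :=
  ((Ext R (ModuleCat.{0} R) k).obj (op (ModuleCat.of R M))).obj (ModuleCat.of R N)

/-- `pdim M ≤ d`, characterized by vanishing of `Ext^k(M, N)` for all `k > d` and all `N`. -/
def CPdimLE (R : Type) [CommRing R] (M : Type) [AddCommGroup M] [Module R M] (d : ℕ) : Prop :=
  ∀ k, d < k → ∀ (N : Type) [AddCommGroup N] [Module R N], Subsingleton (CExt R k M N)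

/-- The grade `j(M)`: the least `k` with `Ext_R^k(M, R) ≠ 0`. -/
def cGrade (R : Type) [CommRing R] (M : Type) [AddCommGroup M] [Module R M] : ℕ :=
  sInf {k | Nontrivial (CExt R k M R)}

/-- Homology of a complex `⋯ → M (q+2) → M (q+1) → M q → ⋯` at slot `q + 1`:
`ker (d q) / im (d (q+1))`. (So the paper's `H_i`, `i ≥ 1`, is `Hml d (i - 1)`.) -/
abbrev Hml {R : Type} [CommRing R] {M : ℕ → Type} [∀ q, AddCommGroup (M q)]
    [∀ q, Module R (M q)] (d : ∀ q, M (q + 1) →ₗ[R] M q) (q : ℕ) : Type :=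
  ↥(LinearMap.ker (d q)) ⧸
    Submodule.comap (LinearMap.ker (d q)).subtype (LinearMap.range (d (q + 1)))

/-- The depth of `M` over a Noetherian local ring, characterized homologically as the least
`k` with `Ext_R^k(R/𝔪, M) ≠ 0` (with depth of the zero module equal to `⊤`). -/
def depthE (R : Type) [CommRing R] [IsLocalRing R] (M : Type) [AddCommGroup M]
    [Module R M] : ℕ∞ :=
  sInf {k : ℕ∞ | ∃ n : ℕ, k = (n : ℕ∞) ∧ Nontrivial (CExt R n (IsLocalRing.ResidueField R) M)}

open Limits

namespace ChainComplex

variable (R : Type*) [Ring R] {C : Type*} [Category* C] [Abelian C] [Linear R C]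

def linearYonedaObjMap {α : Type*} [AddRightCancelSemigroup α] [One α] (K : ChainComplex C α)
    {Y Y' : C} (φ : Y ⟶ Y') : K.linearYonedaObj R Y ⟶ K.linearYonedaObj R Y' where
  f n := ModuleCat.ofHom (Linear.rightComp R _ φ)
  comm' i j _ := by
    ext (x : _ ⟶ _)
    exact (Category.assoc (K.d j i) x φ).symm

variable (K : ChainComplex C ℕ)

lemma shortExact_linearYonedaObj [∀ n, Projective (K.X n)] {S : ShortComplex C}
    (hS : S.ShortExact) :
    (ShortComplex.mk (K.linearYonedaObjMap R S.f) (K.linearYonedaObjMap R S.g) (by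
      ext n (x : _ ⟶ _)
      exact (Category.assoc x S.f S.g).trans (by simp; rfl))).ShortExact := by
  have := hS.mono_f
  have := hS.epi_g
  refine HomologicalComplex.shortExact_of_degreewise_shortExact _ fun n ↦
    { exact := ?_, mono_f := ?_, epi_g := ?_ }
  · refine ShortComplex.moduleCat_exact_iff _ |>.mpr fun x hx ↦ ?_
    exact ⟨hS.exact.lift x hx, hS.exact.lift_f x hx⟩
  · exact (ModuleCat.mono_iff_injective _).mpr fun x y hxy ↦ (cancel_mono S.f).mp hxy
  · exact (ModuleCat.epi_iff_surjective _).mpr fun y ↦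
      ⟨Projective.factorThru y S.g, Projective.factorThru_comp y S.g⟩

-- In degree `0` homology is just cycles, which inherit injectivity from the degree-`0` component.
instance mono_homologyMap_linearYonedaObjMap_zero {Y Y' : C} (φ : Y ⟶ Y') [Mono φ] :
    Mono (HomologicalComplex.homologyMap (K.linearYonedaObjMap R φ) 0) := by
  have : Mono ((K.linearYonedaObjMap R φ).f 0) :=
    (ModuleCat.mono_iff_injective _).mpr fun x y hxy ↦ (cancel_mono φ).mp hxy
  exact mono_of_mono_fac (CochainComplex.isoHomologyπ₀_inv_naturality _)

end ChainComplex

section Ext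

variable {R : Type*} [Ring R] {C : Type*} [Category* C] [Abelian C] [Linear R C]
  [EnoughProjectives C]

lemma isZero_Ext_of_isZero {Y : C} (hY : IsZero Y) (X : C) (n : ℕ) :
    IsZero (((Ext R C n).obj (op X)).obj Y) := by
  let P := projectiveResolution X
  have : IsZero ((P.complex.linearYonedaObj R Y).X n) :=
    ModuleCat.isZero_iff_subsingleton.mpr ⟨fun (f g : P.complex.X n ⟶ Y) ↦ hY.eq_of_tgt f g⟩
  exact (ShortComplex.isZero_homology_of_isZero_X₂ _ this).of_iso (P.isoExt n Y)

lemma isZero_Ext_X₃_of_shortExact {S : ShortComplex C} (hS : S.ShortExact) (X : C) (n : ℕ)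
    (h₂ : IsZero (((Ext R C n).obj (op X)).obj S.X₂))
    (h₁ : IsZero (((Ext R C (n + 1)).obj (op X)).obj S.X₁)) :
    IsZero (((Ext R C n).obj (op X)).obj S.X₃) := by
  let P := projectiveResolution X
  have hexact := (P.complex.shortExact_linearYonedaObj R hS).homology_exact₃ n (n + 1) rfl
  refine (hexact.isZero_X₂ ?_ ?_).of_iso (P.isoExt n S.X₃)
  · exact (h₂.of_iso (P.isoExt n S.X₂).symm).eq_of_src _ _
  · exact (h₁.of_iso (P.isoExt (n + 1) S.X₁).symm).eq_of_tgt _ _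

lemma isZero_Ext_zero_of_mono {Y Y' : C} (φ : Y ⟶ Y') [Mono φ] (X : C)
    (h : IsZero (((Ext R C 0).obj (op X)).obj Y')) :
    IsZero (((Ext R C 0).obj (op X)).obj Y) := by
  let P := projectiveResolution X
  exact ((h.of_iso (P.isoExt 0 Y').symm).of_mono
    (HomologicalComplex.homologyMap (P.complex.linearYonedaObjMap R φ) 0)).of_iso (P.isoExt 0 Y)

end Ext

section Modules

variable {R : Type} [CommRing R] {X N₁ N₂ N₃ : Type} [AddCommGroup X] [Module R X]
  [AddCommGroup N₁] [Module R N₁] [AddCommGroup N₂] [Module R N₂] [AddCommGroup N₃] [Module R N₃]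

lemma subsingleton_CExt_of_subsingleton [Subsingleton N₁] (n : ℕ) :
    Subsingleton (CExt R n X N₁) :=
  ModuleCat.isZero_iff_subsingleton.mp <|
    isZero_Ext_of_isZero (ModuleCat.isZero_of_subsingleton _) _ n

lemma subsingleton_CExt_of_exact {f : N₁ →ₗ[R] N₂} {g : N₂ →ₗ[R] N₃}
    (hf : Function.Injective f) (hfg : Function.Exact f g) (hg : Function.Surjective g) {n : ℕ}
    (h₂ : Subsingleton (CExt R n X N₂)) (h₁ : Subsingleton (CExt R (n + 1) X N₁)) :
    Subsingleton (CExt R n X N₃) :=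
  ModuleCat.isZero_iff_subsingleton.mp <| isZero_Ext_X₃_of_shortExact
    (ModuleCat.shortComplex_shortExact
      (ModuleCat.shortComplexOfCompEqZero f g hfg.linearMap_comp_eq_zero) hfg hf hg) _ n
    (ModuleCat.isZero_iff_subsingleton.mpr h₂) (ModuleCat.isZero_iff_subsingleton.mpr h₁)

lemma subsingleton_CExt_zero_of_injective {f : N₁ →ₗ[R] N₂} (hf : Function.Injective f)
    (h : Subsingleton (CExt R 0 X N₂)) : Subsingleton (CExt R 0 X N₁) :=
  have : Mono (ModuleCat.ofHom f) := (ModuleCat.mono_iff_injective _).mpr hf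
  ModuleCat.isZero_iff_subsingleton.mp <|
    isZero_Ext_zero_of_mono (ModuleCat.ofHom f) _ (ModuleCat.isZero_iff_subsingleton.mpr h)

end Modules

lemma le_depthE_iff {R : Type} [CommRing R] [IsLocalRing R] {N : Type} [AddCommGroup N]
    [Module R N] {n : ℕ} :
    (n : ℕ∞) ≤ depthE R N ↔ ∀ k < n, Subsingleton (CExt R k (IsLocalRing.ResidueField R) N) := by
  simp only [depthE, le_sInf_iff, Set.mem_ofPred_eq, forall_exists_index, and_imp]
  refine ⟨fun h k hk ↦ ?_, fun h _ k hk hN ↦ hk ▸ ?_⟩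
  · by_contra hN
    exact absurd (h k k rfl (not_subsingleton_iff_nontrivial.mp hN)) (by exact_mod_cast hk.not_ge)
  · by_contra hkn
    exact not_nontrivial_iff_subsingleton.mpr (h k (by exact_mod_cast not_le.mp hkn)) hN

section Complex

variable {R : Type} [CommRing R] {X : Type} [AddCommGroup X] [Module R X]
  {M : ℕ → Type} [∀ q, AddCommGroup (M q)] [∀ q, Module R (M q)]
  {d : ∀ q, M (q + 1) →ₗ[R] M q}

lemma ker_le_range_of_subsingleton_Hml {q : ℕ} (h : Subsingleton (Hml d q)) :
    LinearMap.ker (d q) ≤ LinearMap.range (d (q + 1)) :=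
  Submodule.comap_subtype_eq_top.mp (Submodule.Quotient.subsingleton_iff.mp h)

lemma subsingleton_CExt_range_of_succ (hcomplex : ∀ q, d q ∘ₗ d (q + 1) = 0) {q n : ℕ}
    (hq : Subsingleton (Hml d q)) (hM : Subsingleton (CExt R n X (M (q + 1))))
    (hrange : Subsingleton (CExt R (n + 1) X (LinearMap.range (d (q + 1))))) :
    Subsingleton (CExt R n X (LinearMap.range (d q))) := by
  refine subsingleton_CExt_of_exact (Submodule.injective_subtype _) ?_
    (d q).surjective_rangeRestrict hM hrange
  rw [LinearMap.exact_iff, LinearMap.ker_rangeRestrict, Submodule.range_subtype]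
  exact le_antisymm (ker_le_range_of_subsingleton_Hml hq)
    (LinearMap.range_le_ker_iff.mpr (hcomplex q))

theorem subsingleton_CExt_range {m : ℕ} (hcomplex : ∀ q, d q ∘ₗ d (q + 1) = 0)
    (hbounded : ∀ q, m < q → Subsingleton (M q))
    (hdepth : ∀ j, ∀ n < j, Subsingleton (CExt R n X (M j)))
    {q : ℕ} (hexact : ∀ k, q ≤ k → Subsingleton (Hml d k)) :
    ∀ n ≤ q, Subsingleton (CExt R n X (LinearMap.range (d q))) := by
  have base (k : ℕ) (hk : m ≤ k) (n : ℕ) :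
      Subsingleton (CExt R n X (LinearMap.range (d k))) :=
    have := hbounded (k + 1) (by omega)
    have := (d k).surjective_rangeRestrict.subsingleton
    subsingleton_CExt_of_subsingleton n
  rcases le_total m q with hmq | hqm
  · exact fun n _ ↦ base q hmq n
  · refine Nat.decreasingInduction' (fun k _ hqk ih n hn ↦ ?_) hqm fun n _ ↦ base m le_rfl n
    exact subsingleton_CExt_range_of_succ hcomplex (hexact k hqk) (hdepth _ _ (by omega))
      (ih _ (by omega))

theorem subsingleton_CExt_zero_Hml {m : ℕ} (hcomplex : ∀ q, d q ∘ₗ d (q + 1) = 0)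
    (hbounded : ∀ q, m < q → Subsingleton (M q))
    (hdepth : ∀ j, ∀ n < j, Subsingleton (CExt R n X (M j)))
    {q : ℕ} (hexact : ∀ k, q < k → Subsingleton (Hml d k)) :
    Subsingleton (CExt R 0 X (Hml d q)) := by
  have hle := LinearMap.range_le_ker_iff.mpr (hcomplex q)
  refine subsingleton_CExt_of_exact (Submodule.inclusion_injective hle) ?_
    (Submodule.mkQ_surjective _) ?_ ?_
  · rw [LinearMap.exact_iff, Submodule.ker_mkQ, Submodule.range_inclusion]
  · exact subsingleton_CExt_zero_of_injective (Submodule.injective_subtype _)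
      (hdepth (q + 1) 0 q.succ_pos)
  · exact subsingleton_CExt_range hcomplex hbounded hdepth hexact 1 (by omega)

end Complex

theorem stmt10_general (R : Type) [CommRing R] [IsLocalRing R] (m : ℕ)
    (M : ℕ → Type) [∀ q, AddCommGroup (M q)] [∀ q, Module R (M q)]
    (d : ∀ q, M (q + 1) →ₗ[R] M q)
    (hcomplex : ∀ q, (d q) ∘ₗ (d (q + 1)) = 0)
    (hbounded : ∀ q, m < q → Subsingleton (M q))
    (hdepth : ∀ j : ℕ, (j : ℕ∞) ≤ depthE R (M j))
    (i : ℕ) (hi : 0 < i)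
    (htop : ∀ k, i < k → Subsingleton (Hml d (k - 1))) :
    1 ≤ depthE R (Hml d (i - 1)) := by
  obtain ⟨q, rfl⟩ : ∃ q, i = q + 1 := ⟨i - 1, by omega⟩
  have hexact (k : ℕ) (hk : q < k) : Subsingleton (Hml d k) := by
    simpa using htop (k + 1) (by omega)
  refine (le_depthE_iff (n := 1)).mpr fun k hk ↦ ?_
  obtain rfl : k = 0 := by omega
  exact subsingleton_CExt_zero_Hml hcomplex hbounded
    (fun j ↦ le_depthE_iff.mp (hdepth j)) hexact

/-- the classical Peskine–Szpiro Acyclicity Lemma: if `depth M_j ≥ j`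
for all `j` and `i > 0` is the largest index with `H_i ≠ 0`, then `depth H_i ≥ 1`. -/
theorem stmt10 (R : Type) [CommRing R] [IsNoetherianRing R] [IsLocalRing R] (m : ℕ)
    (M : ℕ → Type) [∀ q, AddCommGroup (M q)] [∀ q, Module R (M q)]
    [∀ q, Module.Finite R (M q)]
    (d : ∀ q, M (q + 1) →ₗ[R] M q)
    (hcomplex : ∀ q, (d q) ∘ₗ (d (q + 1)) = 0)
    (hbounded : ∀ q, m < q → Subsingleton (M q))
    (hdepth : ∀ j : ℕ, (j : ℕ∞) ≤ depthE R (M j))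
    (i : ℕ) (hi : 0 < i)
    (hnontriv : Nontrivial (Hml d (i - 1)))
    (htop : ∀ k, i < k → Subsingleton (Hml d (k - 1))) :
    1 ≤ depthE R (Hml d (i - 1)) :=
  stmt10_general R m M d hcomplex hbounded hdepth i hi htop
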